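/- (FloodSet unanimity.) If there is a value v : V with init p = v for every process p, then for any delivery pattern, every t ≤ r and every process p satisfy W t p = {v}; in particular every process decides v. -/

import Mathlib

open scoped Classical

/-- The FloodSet execution: `W 0 p = {init p}` and, for `t < r`,
`W (t+1) p = W t p ∪ ⋃ q, (if delivered t q p then W t q else ∅)`
(beyond round `r` the set is just carried along). -/
noncomputable def floodW {n r : ℕ} {V : Type} (init : Fin n → V)
    (delivered : Fin r → Fin n → Fin n → Prop) : ℕ → Fin n → Finset V
  | 0, p => {init p}
  | t + 1, p =>
      if h : t < r then
        floodW init delivered t p ∪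
          Finset.univ.biUnion fun q =>
            if delivered ⟨t, h⟩ q p then floodW init delivered t q else ∅
      else floodW init delivered t p

/-- Process `p` is alive at the end of round `t`. -/
def aliveAtEnd {n r : ℕ} (crash : Fin n → Option (Fin r)) (t : ℕ) (p : Fin n) : Prop :=
  crash p = none ∨ ∃ s : Fin r, crash p = some s ∧ t < s.val

/-- The delivery pattern is consistent with the crash pattern. -/
def consistentDel {n r : ℕ} (crash : Fin n → Option (Fin r))
    (delivered : Fin r → Fin n → Fin n → Prop) : Prop :=
  (∀ (t : Fin r) (q p : Fin n),
      (crash q = none ∨ ∃ s : Fin r, crash q = some s ∧ t.val < s.val) → delivered t q p) ∧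
  (∀ (t : Fin r) (q p : Fin n) (s : Fin r), crash q = some s → s.val < t.val →
      ¬ delivered t q p)

section FloodSet

variable {n r : ℕ} {V : Type} {init : Fin n → V} {delivered : Fin r → Fin n → Fin n → Prop}

theorem floodW_succ_eq_of_forall_eq {t : ℕ} {S : Finset V}
    (h : ∀ q, floodW init delivered t q = S) (p : Fin n) :
    floodW init delivered (t + 1) p = S := by
  rw [floodW]
  split_ifs with ht
  · refine (Finset.union_eq_left.mpr <| Finset.biUnion_subset.mpr fun q _ => ?_).trans (h p)
    split_ifs
    · exact (h q).trans_le (h p).ge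
    · exact Finset.empty_subset _
  · exact h p

theorem floodW_eq_singleton_of_forall_init_eq {v : V} (hv : ∀ p, init p = v) (t : ℕ)
    (p : Fin n) : floodW init delivered t p = {v} := by
  induction t generalizing p with
  | zero => rw [floodW, hv p]
  | succ t ih => exact floodW_succ_eq_of_forall_eq ih p

end FloodSet

theorem stmt_11_general (n r : ℕ)
    (V : Type) [LinearOrder V]
    (init : Fin n → V) (v : V) (hv : ∀ p : Fin n, init p = v)
    (delivered : Fin r → Fin n → Fin n → Prop) :
    (∀ t ≤ r, ∀ p : Fin n, floodW init delivered t p = {v}) ∧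
    ∀ p : Fin n, (floodW init delivered r p).min = (v : WithBot V) :=
  ⟨fun t _ => floodW_eq_singleton_of_forall_init_eq hv t, fun p => by
    rw [floodW_eq_singleton_of_forall_init_eq hv r p]
    exact Finset.min_singleton⟩

/-- FloodSet unanimity. -/
theorem stmt_11 (n r : ℕ) (hr : 1 ≤ r)
    (V : Type) [Fintype V] [Nonempty V] [LinearOrder V]
    (init : Fin n → V) (v : V) (hv : ∀ p : Fin n, init p = v)
    (delivered : Fin r → Fin n → Fin n → Prop) :
    (∀ t ≤ r, ∀ p : Fin n, floodW init delivered t p = {v}) ∧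
    ∀ p : Fin n, (floodW init delivered r p).min = (v : WithBot V) :=
  stmt_11_general n r V init v hv delivered
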